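/- arXiv:2510.21870 — 5 statements merged into one kernel-verified Lean document; each statement's English description precedes it below -/
import Mathlib

section
/- Let m1, m2, n be pairwise relatively prime positive integers with gcd(n,m1) = gcd(n,m2) = 1, let K be a positive integer with n ≤ m2·K, let p be a prime with m1·p < n, and let q be a prime that divides neither m1 nor m2. For each prime r dividing m2 write α_r for the r-adic valuation of m2. Then n = m1·p + m2·q if and only if the following three conditions all hold: (b) for every prime r dividing m2 there exists an integer j with 1 ≤ j ≤ r−1 such that, in ZMod (r^(α_r+1)), (p) = (n)·(m1)⁻¹ + j·(r^(α_r)); (c) there exists an integer ℓ with 1 ≤ ℓ ≤ q−1 such that, in ZMod (q^2), (p) = (n)·(m1)⁻¹ + ℓ·(q); (d) for every prime s < K with s ≠ q, s not dividing m1 and s not dividing m2, there exists an integer j with 1 ≤ j ≤ s−1 such that, in ZMod s, (p) = (n)·(m1)⁻¹ + j. -/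
/-!
Put `N = n - m₁ p`. Modulo `r ^ (a + 1)` the congruence `p ≡ n m₁⁻¹ + j r ^ a` with a nonzero
digit `j` says exactly that `r ^ (a + 1) ∣ N + m₁ j r ^ a` for such a `j`, i.e. that the `r`-adic
valuation of `N` is `a`. So (b), (c), (d) say that `N` has the same `r`-adic valuation as `m₂` at
the primes of `m₂`, is divisible by `q` exactly once, and has no other prime factor below `K`
(prime factors of `m₁` are excluded by `gcd(n, m₁) = 1`). Hence `N = m₂ M` where `q` divides `M`
exactly once and all other prime factors of `M` are at least `K`; since `M ≤ K`, `M = q`.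
-/

theorem ZMod.natCast_eq_mul_inv_add_iff_dvd {t m p n N c : ℕ} [NeZero t] (hm : m.Coprime t)
    (hn : m * p + N = n) :
    (p : ZMod t) = n * (m : ZMod t)⁻¹ + c ↔ t ∣ N + m * c := by
  have hinv : (m : ZMod t) * (m : ZMod t)⁻¹ = 1 :=
    ZMod.mul_inv_of_unit _ ((ZMod.isUnit_iff_coprime m t).mpr hm)
  rw [← ZMod.natCast_eq_zero_iff, ← hn]
  push_cast
  constructor
  · intro h
    linear_combination -(m : ZMod t) * h - (m * p + N : ZMod t) * hinv
  · intro h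
    linear_combination -(m : ZMod t)⁻¹ * h - (p - c : ZMod t) * hinv

theorem Nat.Prime.exists_dvd_add_mul {r b m : ℕ} (hr : r.Prime) (hb : ¬ r ∣ b) (hm : ¬ r ∣ m) :
    ∃ j, 1 ≤ j ∧ j ≤ r - 1 ∧ r ∣ b + m * j := by
  have := Fact.mk hr
  have hm0 : (m : ZMod r) ≠ 0 := by rwa [Ne, ZMod.natCast_eq_zero_iff]
  set x : ZMod r := -b * (m : ZMod r)⁻¹
  have hx : x ≠ 0 :=
    mul_ne_zero (neg_ne_zero.mpr (by rwa [Ne, ZMod.natCast_eq_zero_iff])) (inv_ne_zero hm0)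
  refine ⟨x.val, Nat.one_le_iff_ne_zero.mpr ((ZMod.val_ne_zero x).mpr hx),
    Nat.le_sub_one_of_lt (ZMod.val_lt x), ?_⟩
  rw [← ZMod.natCast_eq_zero_iff]
  push_cast
  rw [ZMod.natCast_zmod_val]
  linear_combination (-(b : ZMod r)) * mul_inv_cancel₀ hm0

theorem Nat.Prime.exists_pow_succ_dvd_add_iff {r m N : ℕ} (a : ℕ) (hr : r.Prime) (hm : ¬ r ∣ m) :
    (∃ j, 1 ≤ j ∧ j ≤ r - 1 ∧ r ^ (a + 1) ∣ N + m * (j * r ^ a)) ↔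
      r ^ a ∣ N ∧ ¬ r ^ (a + 1) ∣ N := by
  constructor
  · rintro ⟨j, hj1, hjr, hdvd⟩
    have hshift : m * (j * r ^ a) = r ^ a * (m * j) := by ring
    refine ⟨(Nat.dvd_add_left (hshift ▸ dvd_mul_right _ _)).mp
      ((pow_dvd_pow r a.le_succ).trans hdvd), fun hN => ?_⟩
    rw [Nat.dvd_add_right hN, hshift, pow_succ,
      Nat.mul_dvd_mul_iff_left (pow_pos hr.pos a)] at hdvd
    rcases hr.dvd_mul.mp hdvd with hrm | hrj
    · exact hm hrm
    · have := Nat.le_of_dvd hj1 hrj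
      omega
  · rintro ⟨⟨b, rfl⟩, hN⟩
    have hb : ¬ r ∣ b := fun hrb => hN (pow_succ r a ▸ Nat.mul_dvd_mul_left _ hrb)
    obtain ⟨j, hj1, hjr, hdvd⟩ := hr.exists_dvd_add_mul hb hm
    refine ⟨j, hj1, hjr, ?_⟩
    rw [show r ^ a * b + m * (j * r ^ a) = r ^ a * (b + m * j) by ring, pow_succ]
    exact Nat.mul_dvd_mul_left _ hdvd

theorem Nat.Prime.factorization_eq_iff {r N a : ℕ} (hr : r.Prime) (hN : N ≠ 0) :
    N.factorization r = a ↔ r ^ a ∣ N ∧ ¬ r ^ (a + 1) ∣ N := by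
  rw [hr.pow_dvd_iff_le_factorization hN, hr.pow_dvd_iff_le_factorization hN]
  omega

/-- The modulus is a separate variable `t` so that the cases `a = 1` and `a = 0` apply to the moduli
`q ^ 2` and `s` as written. -/
theorem Nat.Prime.exists_natCast_eq_mul_inv_add_iff {r m p n N a t : ℕ} (hr : r.Prime)
    (hm : ¬ r ∣ m) (hn : m * p + N = n) (hN : N ≠ 0) (ht : t = r ^ (a + 1)) :
    (∃ j, 1 ≤ j ∧ j ≤ r - 1 ∧
        (p : ZMod t) = n * (m : ZMod t)⁻¹ + (j : ZMod t) * (r : ZMod t) ^ a) ↔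
      N.factorization r = a := by
  subst ht
  have : NeZero (r ^ (a + 1)) := ⟨pow_ne_zero _ hr.ne_zero⟩
  have hmt : m.Coprime (r ^ (a + 1)) := ((hr.coprime_iff_not_dvd).mpr hm).symm.pow_right _
  rw [hr.factorization_eq_iff hN, ← hr.exists_pow_succ_dvd_add_iff a hm]
  refine exists_congr fun j => and_congr_right' <| and_congr_right' ?_
  rw [← ZMod.natCast_eq_mul_inv_add_iff_dvd hmt hn]
  push_cast
  rfl

theorem Nat.Prime.eq_of_factorization_eq_one {M K q : ℕ} (hq : q.Prime) (hM : M ≠ 0)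
    (hMK : M ≤ K) (hMq : M.factorization q = 1)
    (hlarge : ∀ s, s.Prime → s ∣ M → s ≠ q → K ≤ s) : M = q := by
  refine Nat.eq_of_factorization_eq hM hq.ne_zero fun s => ?_
  rw [hq.factorization, Finsupp.single_apply]
  split_ifs with hqs
  · exact hqs ▸ hMq
  rw [Nat.factorization_eq_zero_iff]
  by_contra! hs
  obtain ⟨hs, hsM, -⟩ := hs
  have hqM : q ∣ M := (hq.dvd_iff_one_le_factorization hM).mpr hMq.ge
  have hqsM : q * s ∣ M :=
    ((Nat.coprime_primes hq hs).mpr hqs).mul_dvd_of_dvd_of_dvd hqM hsM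
  have := Nat.le_of_dvd (Nat.pos_of_ne_zero hM) hqsM
  have := hlarge s hs hsM (Ne.symm hqs)
  linarith [Nat.mul_le_mul_right s hq.two_le, hs.pos]

theorem Nat.eq_mul_prime_iff_factorization {m₁ m₂ N K q : ℕ} (hq : q.Prime) (hqm₂ : ¬ q ∣ m₂)
    (hNK : N ≤ m₂ * K) (hNm₁ : N.Coprime m₁) :
    N = m₂ * q ↔
      (∀ r, r.Prime → r ∣ m₂ → N.factorization r = m₂.factorization r) ∧
        N.factorization q = 1 ∧
        ∀ s, s.Prime → s < K → s ≠ q → ¬ s ∣ m₁ → ¬ s ∣ m₂ → N.factorization s = 0 := by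
  have hm₂ : m₂ ≠ 0 := by rintro rfl; exact hqm₂ (dvd_zero q)
  constructor
  · rintro rfl
    have hfac : ∀ s, (m₂ * q).factorization s = m₂.factorization s + if q = s then 1 else 0 := by
      intro s
      rw [Nat.factorization_mul hm₂ hq.ne_zero, Finsupp.add_apply, hq.factorization,
        Finsupp.single_apply]
    refine ⟨fun r _ hrm₂ => ?_, ?_, fun s _ _ hsq _ hsm₂ => ?_⟩
    · rw [hfac, if_neg (by rintro rfl; exact hqm₂ hrm₂), add_zero]
    · rw [hfac, if_pos rfl, Nat.factorization_eq_zero_of_not_dvd hqm₂]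
    · rw [hfac, if_neg (Ne.symm hsq), Nat.factorization_eq_zero_of_not_dvd hsm₂]
  · rintro ⟨hm₂N, hqN, hsmall⟩
    have hN : N ≠ 0 := by rintro rfl; simp at hqN
    have hdvd : m₂ ∣ N := by
      rw [← Nat.factorization_le_iff_dvd hm₂ hN]
      intro r
      by_cases hr : r.Prime ∧ r ∣ m₂
      · exact (hm₂N r hr.1 hr.2).ge
      · rw [(Nat.factorization_eq_zero_iff _ _).mpr (by tauto)]
        exact Nat.zero_le _
    obtain ⟨M, rfl⟩ := hdvd
    have hM : M ≠ 0 := right_ne_zero_of_mul hN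
    have hMfac : ∀ s, M.factorization s = (m₂ * M).factorization s - m₂.factorization s := by
      intro s
      rw [Nat.factorization_mul hm₂ hM, Finsupp.add_apply]
      omega
    congr 1
    refine hq.eq_of_factorization_eq_one hM
      (Nat.le_of_mul_le_mul_left hNK (Nat.pos_of_ne_zero hm₂))
      (by rw [hMfac, hqN, Nat.factorization_eq_zero_of_not_dvd hqm₂]) fun s hs hsM hsq => ?_
    have hsm₂ : ¬ s ∣ m₂ := by
      intro hsm₂
      have := (hs.dvd_iff_one_le_factorization hM).mp hsM
      rw [hMfac, hm₂N s hs hsm₂] at this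
      omega
    have hsN : s ∣ m₂ * M := dvd_mul_of_dvd_right hsM m₂
    have hsm₁ : ¬ s ∣ m₁ := fun hsm₁ => hs.one_lt.ne' (Nat.eq_one_of_dvd_coprimes hNm₁ hsN hsm₁)
    by_contra! hsK
    have := (hs.dvd_iff_one_le_factorization hN).mp hsN
    rw [hsmall s hs hsK hsq hsm₁ hsm₂] at this
    omega

theorem stmt_1_general (m1 m2 n K : ℕ)
    (h12 : Nat.gcd m1 m2 = 1) (hn1 : Nat.gcd n m1 = 1)
    (hnK : n ≤ m2 * K) (p q : ℕ) (hq : q.Prime)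
    (hqm1 : ¬ q ∣ m1) (hqm2 : ¬ q ∣ m2) (hpn : m1 * p < n) :
    n = m1 * p + m2 * q ↔
      ((∀ r : ℕ, r.Prime → r ∣ m2 →
          ∃ j : ℕ, 1 ≤ j ∧ j ≤ r - 1 ∧
            (p : ZMod (r ^ (m2.factorization r + 1))) =
              (n : ZMod (r ^ (m2.factorization r + 1))) *
                  (m1 : ZMod (r ^ (m2.factorization r + 1)))⁻¹ +
                (j : ZMod (r ^ (m2.factorization r + 1))) *
                  (r : ZMod (r ^ (m2.factorization r + 1))) ^ (m2.factorization r)) ∧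
        (∃ l : ℕ, 1 ≤ l ∧ l ≤ q - 1 ∧
          (p : ZMod (q ^ 2)) =
            (n : ZMod (q ^ 2)) * (m1 : ZMod (q ^ 2))⁻¹ +
              (l : ZMod (q ^ 2)) * (q : ZMod (q ^ 2))) ∧
        (∀ s : ℕ, s.Prime → s < K → s ≠ q → ¬ s ∣ m1 → ¬ s ∣ m2 →
          ∃ j : ℕ, 1 ≤ j ∧ j ≤ s - 1 ∧
            (p : ZMod s) = (n : ZMod s) * (m1 : ZMod s)⁻¹ + (j : ZMod s))) := by
  obtain ⟨N, hN⟩ : ∃ N, m1 * p + N = n := ⟨n - m1 * p, by omega⟩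
  have hN0 : N ≠ 0 := by omega
  have hNm1 : N.Coprime m1 := by
    rwa [← Nat.coprime_add_mul_left_left N m1 p, add_comm, hN]
  have hrm1 : ∀ r, r.Prime → r ∣ m2 → ¬ r ∣ m1 := fun r hr hrm2 hrm1 =>
    hr.one_lt.ne' (Nat.eq_one_of_dvd_coprimes h12 hrm1 hrm2)
  rw [show n = m1 * p + m2 * q ↔ N = m2 * q by omega,
    Nat.eq_mul_prime_iff_factorization (K := K) hq hqm2 (by omega) hNm1]
  refine and_congr (forall₃_congr fun r hr hrm2 => ?_) (and_congr ?_ ?_)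
  · exact (hr.exists_natCast_eq_mul_inv_add_iff (hrm1 r hr hrm2) hN hN0 rfl).symm
  · simpa only [pow_one] using
      (hq.exists_natCast_eq_mul_inv_add_iff (a := 1) hqm1 hN hN0 rfl).symm
  · refine forall_congr' fun s => forall₅_congr fun hs _ _ hsm1 _ => ?_
    simpa only [pow_zero, mul_one] using
      (hs.exists_natCast_eq_mul_inv_add_iff (a := 0) hsm1 hN hN0 (by rw [zero_add, pow_one])).symm

theorem stmt_1 (m1 m2 n K : ℕ) (hm1 : 0 < m1) (hm2 : 0 < m2) (hn : 0 < n) (hK : 0 < K)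
    (h12 : Nat.gcd m1 m2 = 1) (hn1 : Nat.gcd n m1 = 1) (hn2 : Nat.gcd n m2 = 1)
    (hnK : n ≤ m2 * K) (p q : ℕ) (hp : p.Prime) (hq : q.Prime)
    (hqm1 : ¬ q ∣ m1) (hqm2 : ¬ q ∣ m2) (hpn : m1 * p < n) :
    n = m1 * p + m2 * q ↔
      ((∀ r : ℕ, r.Prime → r ∣ m2 →
          ∃ j : ℕ, 1 ≤ j ∧ j ≤ r - 1 ∧
            (p : ZMod (r ^ (m2.factorization r + 1))) =
              (n : ZMod (r ^ (m2.factorization r + 1))) *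
                  (m1 : ZMod (r ^ (m2.factorization r + 1)))⁻¹ +
                (j : ZMod (r ^ (m2.factorization r + 1))) *
                  (r : ZMod (r ^ (m2.factorization r + 1))) ^ (m2.factorization r)) ∧
        (∃ l : ℕ, 1 ≤ l ∧ l ≤ q - 1 ∧
          (p : ZMod (q ^ 2)) =
            (n : ZMod (q ^ 2)) * (m1 : ZMod (q ^ 2))⁻¹ +
              (l : ZMod (q ^ 2)) * (q : ZMod (q ^ 2))) ∧
        (∀ s : ℕ, s.Prime → s < K → s ≠ q → ¬ s ∣ m1 → ¬ s ∣ m2 →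
          ∃ j : ℕ, 1 ≤ j ∧ j ≤ s - 1 ∧
            (p : ZMod s) = (n : ZMod s) * (m1 : ZMod s)⁻¹ + (j : ZMod s))) :=
  stmt_1_general m1 m2 n K h12 hn1 hnK p q hq hqm1 hqm2 hpn
end

section
/- Let m1, m2, n be pairwise relatively prime positive integers with gcd(n,m1) = gcd(n,m2) = 1, let K be a positive integer with n ≤ m2·K, let p be a prime with m1·p < n, and let q be a prime dividing m2 (so in particular q does not divide m1). For each prime r dividing m2 write α_r for the r-adic valuation of m2. Then n = m1·p + m2·q if and only if the following three conditions all hold: (f) for every prime r dividing m2 with r ≠ q there exists an integer j with 1 ≤ j ≤ r−1 such that, in ZMod (r^(α_r+1)), (p) = (n)·(m1)⁻¹ + j·(r^(α_r)); (g) there exists an integer j with 1 ≤ j ≤ q−1 such that, in ZMod (q^(α_q+2)), (p) = (n)·(m1)⁻¹ + j·(q^(α_q+1)); (h) for every prime s < K with s not dividing m1 and s not dividing m2, there exists an integer j with 1 ≤ j ≤ s−1 such that, in ZMod s, (p) = (n)·(m1)⁻¹ + j. -/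
private lemma keyJ (r m1 M : ℕ) (hr : r.Prime) (h1 : ¬ r ∣ m1) (h2 : ¬ r ∣ M) :
    ∃ j : ℕ, 1 ≤ j ∧ j ≤ r - 1 ∧ r ∣ j * m1 + M := by
  haveI : Fact r.Prime := ⟨hr⟩
  have hm1' : (m1 : ZMod r) ≠ 0 := by
    rw [Ne, ZMod.natCast_eq_zero_iff]; exact h1
  have hM' : (M : ZMod r) ≠ 0 := by
    rw [Ne, ZMod.natCast_eq_zero_iff]; exact h2
  set x : ZMod r := -(M : ZMod r) * (m1 : ZMod r)⁻¹ with hx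
  have hx0 : x ≠ 0 := by
    simp [hx, neg_eq_zero, hM', inv_eq_zero, hm1']
  refine ⟨x.val, ?_, ?_, ?_⟩
  · have := (ZMod.val_eq_zero x).not.mpr hx0
    omega
  · have := ZMod.val_lt x
    omega
  · rw [← ZMod.natCast_eq_zero_iff]
    push_cast
    rw [ZMod.natCast_zmod_val, hx, mul_assoc, inv_mul_cancel₀ hm1']
    ring

private lemma conv2 (N m1 n p c : ℕ) [NeZero N] (hco : Nat.Coprime m1 N) (hlt : m1 * p < n) :
    ((p : ZMod N) = (n : ZMod N) * (m1 : ZMod N)⁻¹ + (c : ZMod N)) ↔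
      N ∣ (n - m1 * p) + m1 * c := by
  have hu : (m1 : ZMod N) * (m1 : ZMod N)⁻¹ = 1 := ZMod.coe_mul_inv_eq_one m1 hco
  have hU : IsUnit (m1 : ZMod N) := IsUnit.of_mul_eq_one _ hu
  have key : (m1 : ZMod N) * ((n : ZMod N) * (m1 : ZMod N)⁻¹ + (c : ZMod N))
      = ((n + m1 * c : ℕ) : ZMod N) := by
    push_cast
    rw [mul_add, ← mul_assoc, mul_comm (m1 : ZMod N) (n : ZMod N), mul_assoc, hu, mul_one]
  have step1 : ((p : ZMod N) = (n : ZMod N) * (m1 : ZMod N)⁻¹ + (c : ZMod N)) ↔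
      ((m1 * p : ℕ) : ZMod N) = ((n + m1 * c : ℕ) : ZMod N) := by
    constructor
    · intro h; rw [Nat.cast_mul, h, key]
    · intro h
      apply hU.mul_left_cancel
      rw [key, ← h, Nat.cast_mul]
  rw [step1, ZMod.natCast_eq_natCast_iff, Nat.modEq_iff_dvd' (by omega)]
  have heq : n + m1 * c - m1 * p = (n - m1 * p) + m1 * c := by omega
  rw [heq]

theorem stmt_2 (m1 m2 n K : ℕ) (hm1 : 0 < m1) (hm2 : 0 < m2) (hn : 0 < n) (hK : 0 < K)
    (h12 : Nat.gcd m1 m2 = 1) (hn1 : Nat.gcd n m1 = 1) (hn2 : Nat.gcd n m2 = 1)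
    (hnK : n ≤ m2 * K) (p q : ℕ) (hp : p.Prime) (hq : q.Prime)
    (hqm2 : q ∣ m2) (hpn : m1 * p < n) :
    n = m1 * p + m2 * q ↔
      ((∀ r : ℕ, r.Prime → r ∣ m2 → r ≠ q →
          ∃ j : ℕ, 1 ≤ j ∧ j ≤ r - 1 ∧
            (p : ZMod (r ^ (m2.factorization r + 1))) =
              (n : ZMod (r ^ (m2.factorization r + 1))) *
                  (m1 : ZMod (r ^ (m2.factorization r + 1)))⁻¹ +
                (j : ZMod (r ^ (m2.factorization r + 1))) *
                  (r : ZMod (r ^ (m2.factorization r + 1))) ^ (m2.factorization r)) ∧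
        (∃ j : ℕ, 1 ≤ j ∧ j ≤ q - 1 ∧
          (p : ZMod (q ^ (m2.factorization q + 2))) =
            (n : ZMod (q ^ (m2.factorization q + 2))) *
                (m1 : ZMod (q ^ (m2.factorization q + 2)))⁻¹ +
              (j : ZMod (q ^ (m2.factorization q + 2))) *
                (q : ZMod (q ^ (m2.factorization q + 2))) ^ (m2.factorization q + 1)) ∧
        (∀ s : ℕ, s.Prime → s < K → ¬ s ∣ m1 → ¬ s ∣ m2 →
          ∃ j : ℕ, 1 ≤ j ∧ j ≤ s - 1 ∧
            (p : ZMod s) = (n : ZMod s) * (m1 : ZMod s)⁻¹ + (j : ZMod s))) := by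
  have hnd2 : ∀ r : ℕ, r.Prime → r ∣ m2 → ¬ r ∣ m1 := by
    intro r hr hrm2 h
    have := Nat.dvd_gcd h hrm2
    rw [h12] at this
    have := Nat.le_of_dvd one_pos this
    have := hr.two_le
    omega
  have hqm1 : ¬ q ∣ m1 := hnd2 q hq hqm2
  constructor
  · -- forward
    intro heq
    refine ⟨?_, ?_, ?_⟩
    · -- (f)
      intro r hr hrm2 hrq
      set α := m2.factorization r with hα
      haveI : NeZero (r ^ (α + 1)) := ⟨pow_ne_zero _ hr.pos.ne'⟩
      have hrm1 : ¬ r ∣ m1 := hnd2 r hr hrm2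
      have hco : Nat.Coprime m1 (r ^ (α + 1)) :=
        (((hr.coprime_iff_not_dvd).mpr hrm1).symm).pow_right _
      set u := m2 / r ^ α with hu
      have hm2eq : r ^ α * u = m2 := Nat.ordProj_mul_ordCompl_eq_self m2 r
      have hru : ¬ r ∣ u := Nat.not_dvd_ordCompl hr hm2.ne'
      have hrq' : ¬ r ∣ q := fun h => hrq ((Nat.prime_dvd_prime_iff_eq hr hq).mp h)
      have hM : ¬ r ∣ u * q := fun h => (hr.dvd_mul.mp h).elim hru hrq'
      obtain ⟨j, hj1, hj2, hjd⟩ := keyJ r m1 (u * q) hr hrm1 hM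
      refine ⟨j, hj1, hj2, ?_⟩
      have hc : (j : ZMod (r ^ (α + 1))) * (r : ZMod (r ^ (α + 1))) ^ α
          = ((j * r ^ α : ℕ) : ZMod (r ^ (α + 1))) := by push_cast; ring
      rw [hc, conv2 _ _ _ _ _ hco hpn]
      have h1 : n - m1 * p = m2 * q := by omega
      rw [h1, ← hm2eq]
      have h2 : r ^ α * u * q + m1 * (j * r ^ α) = r ^ α * (j * m1 + u * q) := by ring
      rw [h2, pow_succ]
      exact mul_dvd_mul_left _ hjd
    · -- (g)
      set α := m2.factorization q with hα
      haveI : NeZero (q ^ (α + 2)) := ⟨pow_ne_zero _ hq.pos.ne'⟩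
      have hco : Nat.Coprime m1 (q ^ (α + 2)) :=
        (((hq.coprime_iff_not_dvd).mpr hqm1).symm).pow_right _
      set u := m2 / q ^ α with hu
      have hm2eq : q ^ α * u = m2 := Nat.ordProj_mul_ordCompl_eq_self m2 q
      have hqu : ¬ q ∣ u := Nat.not_dvd_ordCompl hq hm2.ne'
      obtain ⟨j, hj1, hj2, hjd⟩ := keyJ q m1 u hq hqm1 hqu
      refine ⟨j, hj1, hj2, ?_⟩
      have hc : (j : ZMod (q ^ (α + 2))) * (q : ZMod (q ^ (α + 2))) ^ (α + 1)
          = ((j * q ^ (α + 1) : ℕ) : ZMod (q ^ (α + 2))) := by push_cast; ring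
      rw [hc, conv2 _ _ _ _ _ hco hpn]
      have h1 : n - m1 * p = m2 * q := by omega
      rw [h1, ← hm2eq]
      have h2 : q ^ α * u * q + m1 * (j * q ^ (α + 1)) = q ^ (α + 1) * (j * m1 + u) := by ring
      rw [h2]
      have h3 : q ^ (α + 2) = q ^ (α + 1) * q := by ring
      rw [h3]
      exact mul_dvd_mul_left _ hjd
    · -- (h)
      intro s hs hsK hsm1 hsm2
      haveI : NeZero s := ⟨hs.pos.ne'⟩
      have hco : Nat.Coprime m1 s := ((hs.coprime_iff_not_dvd).mpr hsm1).symm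
      have hsq : ¬ s ∣ q := by
        intro h
        exact hsm2 (((Nat.prime_dvd_prime_iff_eq hs hq).mp h) ▸ hqm2)
      have hM : ¬ s ∣ m2 * q := fun h => (hs.dvd_mul.mp h).elim hsm2 hsq
      obtain ⟨j, hj1, hj2, hjd⟩ := keyJ s m1 (m2 * q) hs hsm1 hM
      refine ⟨j, hj1, hj2, ?_⟩
      rw [conv2 _ _ _ _ _ hco hpn]
      have h1 : n - m1 * p = m2 * q := by omega
      rw [h1]
      have h2 : m2 * q + m1 * j = j * m1 + m2 * q := by ring
      rw [h2]
      exact hjd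
  · -- backward
    rintro ⟨hf, hg, hh⟩
    set d := n - m1 * p with hdd
    have hd0 : 0 < d := by omega
    have hdn : n = m1 * p + d := by omega
    have hfact : ∀ r : ℕ, r.Prime → r ∣ m2 → r ≠ q →
        r ^ (m2.factorization r) ∣ d ∧ ¬ r ^ (m2.factorization r + 1) ∣ d := by
      intro r hr hrm2 hrq
      obtain ⟨j, hj1, hj2, hjeq⟩ := hf r hr hrm2 hrq
      set α := m2.factorization r with hα
      haveI : NeZero (r ^ (α + 1)) := ⟨pow_ne_zero _ hr.pos.ne'⟩
      have hrm1 : ¬ r ∣ m1 := hnd2 r hr hrm2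
      have hco : Nat.Coprime m1 (r ^ (α + 1)) :=
        (((hr.coprime_iff_not_dvd).mpr hrm1).symm).pow_right _
      have hc : (j : ZMod (r ^ (α + 1))) * (r : ZMod (r ^ (α + 1))) ^ α
          = ((j * r ^ α : ℕ) : ZMod (r ^ (α + 1))) := by push_cast; ring
      rw [hc, conv2 _ _ _ _ _ hco hpn] at hjeq
      have hA : r ^ α ∣ d := by
        have h1 : r ^ α ∣ d + m1 * (j * r ^ α) :=
          dvd_trans (pow_dvd_pow r (Nat.le_succ α)) hjeq
        have h2 : r ^ α ∣ m1 * (j * r ^ α) := (dvd_mul_left (r ^ α) j).mul_left m1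
        have := Nat.dvd_sub h1 h2
        simpa using this
      refine ⟨hA, ?_⟩
      intro hB
      have h2 : r ^ (α + 1) ∣ m1 * (j * r ^ α) := by
        have := Nat.dvd_sub hjeq hB
        simpa [← hdd] using this
      have h3 : r ∣ m1 * j := by
        have h4 : r ^ α * r ∣ r ^ α * (m1 * j) := by
          rw [← pow_succ]
          have h5 : r ^ α * (m1 * j) = m1 * (j * r ^ α) := by ring
          rw [h5]
          exact h2
        exact (mul_dvd_mul_iff_left (pow_ne_zero α hr.pos.ne')).mp h4
      rcases hr.dvd_mul.mp h3 with h | h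
      · exact hrm1 h
      · have := Nat.le_of_dvd (by omega) h
        have := hr.two_le
        omega
    have hqfact : q ^ (m2.factorization q + 1) ∣ d ∧ ¬ q ^ (m2.factorization q + 2) ∣ d := by
      obtain ⟨j, hj1, hj2, hjeq⟩ := hg
      set α := m2.factorization q with hα
      haveI : NeZero (q ^ (α + 2)) := ⟨pow_ne_zero _ hq.pos.ne'⟩
      have hco : Nat.Coprime m1 (q ^ (α + 2)) :=
        (((hq.coprime_iff_not_dvd).mpr hqm1).symm).pow_right _
      have hc : (j : ZMod (q ^ (α + 2))) * (q : ZMod (q ^ (α + 2))) ^ (α + 1)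
          = ((j * q ^ (α + 1) : ℕ) : ZMod (q ^ (α + 2))) := by push_cast; ring
      rw [hc, conv2 _ _ _ _ _ hco hpn] at hjeq
      have hA : q ^ (α + 1) ∣ d := by
        have h1 : q ^ (α + 1) ∣ d + m1 * (j * q ^ (α + 1)) :=
          dvd_trans (pow_dvd_pow q (by omega)) hjeq
        have h2 : q ^ (α + 1) ∣ m1 * (j * q ^ (α + 1)) :=
          (dvd_mul_left (q ^ (α + 1)) j).mul_left m1
        have := Nat.dvd_sub h1 h2
        simpa using this
      refine ⟨hA, ?_⟩
      intro hB
      have h2 : q ^ (α + 2) ∣ m1 * (j * q ^ (α + 1)) := by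
        have := Nat.dvd_sub hjeq hB
        simpa [← hdd] using this
      have h3 : q ∣ m1 * j := by
        have h4 : q ^ (α + 1) * q ∣ q ^ (α + 1) * (m1 * j) := by
          have h6 : q ^ (α + 1) * q = q ^ (α + 2) := by ring
          have h5 : q ^ (α + 1) * (m1 * j) = m1 * (j * q ^ (α + 1)) := by ring
          rw [h6, h5]
          exact h2
        exact (mul_dvd_mul_iff_left (pow_ne_zero (α + 1) hq.pos.ne')).mp h4
      rcases hq.dvd_mul.mp h3 with h | h
      · exact hqm1 h
      · have := Nat.le_of_dvd (by omega) h
        have := hq.two_le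
        omega
    have hdvd : m2 * q ∣ d := by
      rw [← Nat.factorization_le_iff_dvd (mul_ne_zero hm2.ne' hq.pos.ne') hd0.ne']
      rw [Finsupp.le_def]
      intro r
      by_cases hrp : r.Prime
      · rw [Nat.factorization_mul hm2.ne' hq.pos.ne', Finsupp.add_apply]
        by_cases hrq : r = q
        · subst hrq
          rw [Nat.Prime.factorization_self hrp]
          exact (Nat.Prime.pow_dvd_iff_le_factorization hrp hd0.ne').mp hqfact.1
        · have hq0 : q.factorization r = 0 :=
            Nat.factorization_eq_zero_of_not_dvd
              (fun h => hrq ((Nat.prime_dvd_prime_iff_eq hrp hq).mp h))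
          rw [hq0, add_zero]
          by_cases hrm2 : r ∣ m2
          · exact (Nat.Prime.pow_dvd_iff_le_factorization hrp hd0.ne').mp
              (hfact r hrp hrm2 hrq).1
          · rw [Nat.factorization_eq_zero_of_not_dvd hrm2]
            exact Nat.zero_le _
      · rw [Nat.factorization_eq_zero_of_not_prime _ hrp]
        exact Nat.zero_le _
    obtain ⟨t, ht⟩ := hdvd
    have ht0 : 0 < t := by
      rcases Nat.eq_zero_or_pos t with h | h
      · rw [h, mul_zero] at ht; omega
      · exact h
    have ht1 : t = 1 := by
      by_contra htne
      set s := t.minFac with hsdef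
      have hs : s.Prime := Nat.minFac_prime htne
      have hst : s ∣ t := Nat.minFac_dvd t
      by_cases hsm2 : s ∣ m2
      · by_cases hsq : s = q
        · have hbad : q ^ (m2.factorization q + 2) ∣ d := by
            rw [ht]
            have h1 : q ^ (m2.factorization q) ∣ m2 := Nat.ordProj_dvd m2 q
            have h2 : q ^ (m2.factorization q + 2) = q ^ (m2.factorization q) * q * q := by ring
            rw [h2]
            exact mul_dvd_mul (mul_dvd_mul h1 dvd_rfl) (hsq ▸ hst)
          exact hqfact.2 hbad
        · have hbad : s ^ (m2.factorization s + 1) ∣ d := by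
            rw [ht]
            have h1 : s ^ (m2.factorization s) ∣ m2 := Nat.ordProj_dvd m2 s
            have h2 : m2 * q * t = (m2 * t) * q := by ring
            rw [h2, pow_succ]
            exact Dvd.dvd.mul_right (mul_dvd_mul h1 hst) q
          exact (hfact s hs hsm2 hsq).2 hbad
      · have hsd : s ∣ d := by
          rw [ht]; exact Dvd.dvd.mul_left hst _
        have hsm1 : ¬ s ∣ m1 := by
          intro h
          have hsn : s ∣ n := by
            rw [hdn]; exact Nat.dvd_add (h.mul_right p) hsd
          have := Nat.dvd_gcd hsn h
          rw [hn1] at this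
          have := Nat.le_of_dvd one_pos this
          have := hs.two_le
          omega
        have hsK : s < K := by
          have hmp : 0 < m1 * p := Nat.mul_pos hm1 hp.pos
          have h1 : m2 * (q * t) < m2 * K := by
            calc m2 * (q * t) = m2 * q * t := by ring
              _ = d := ht.symm
              _ < m2 * K := by omega
          have h2 : q * t < K := Nat.lt_of_mul_lt_mul_left h1
          have h3 : s ≤ t := Nat.minFac_le ht0
          have h4 : t ≤ q * t := Nat.le_mul_of_pos_left t hq.pos
          exact lt_of_le_of_lt (h3.trans h4) h2
        obtain ⟨j, hj1, hj2, hjeq⟩ := hh s hs hsK hsm1 hsm2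
        haveI : NeZero s := ⟨hs.pos.ne'⟩
        have hco : Nat.Coprime m1 s := ((hs.coprime_iff_not_dvd).mpr hsm1).symm
        rw [conv2 _ _ _ _ _ hco hpn] at hjeq
        have h5 : s ∣ m1 * j := by
          have := Nat.dvd_sub hjeq hsd
          simpa [← hdd] using this
        rcases hs.dvd_mul.mp h5 with h | h
        · exact hsm1 h
        · have := Nat.le_of_dvd (by omega) h
          have := hs.two_le
          omega
    rw [hdn, ht, ht1, mul_one]
end

section
/- Let m2 and n be positive integers, let q be a prime not dividing m2, and let x be an integer with 0 < x < n. For each prime r dividing m2 write α_r for the r-adic valuation of m2. Then x = m2·q if and only if the following three conditions all hold: (i) for every prime r dividing m2, r^(α_r) divides x and r^(α_r+1) does not divide x; (ii) q divides x and q² does not divide x; (iii) for every prime s with m2·s < n, s ≠ q and s not dividing m2, s does not divide x. -/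
/-!
Write `d = m2 * q`. The valuation conditions (i) and (ii) say exactly that `x` and `d` have the same
`p`-adic valuation at every prime `p ∣ d`; in particular `d ∣ x`, say `x = d * k`.
A prime factor `s` of `k` cannot divide `d` (it would raise the valuation of `x` at `s`), so by
(iii) it must satisfy `m2 * s ≥ n`; but `m2 * s < d * s ≤ d * k = x < n`. Hence `k = 1`.
-/

namespace Nat

theorem pow_dvd_and_not_pow_succ_dvd_iff {p k y : ℕ} (hp : p.Prime) (hy : y ≠ 0) :
    p ^ k ∣ y ∧ ¬ p ^ (k + 1) ∣ y ↔ y.factorization p = k := by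
  rw [hp.pow_dvd_iff_le_factorization hy, hp.pow_dvd_iff_le_factorization hy]
  omega

theorem dvd_and_not_sq_dvd_iff {p y : ℕ} (hp : p.Prime) (hy : y ≠ 0) :
    p ∣ y ∧ ¬ p ^ 2 ∣ y ↔ y.factorization p = 1 := by
  simpa using pow_dvd_and_not_pow_succ_dvd_iff (k := 1) hp hy

theorem eq_of_factorization_eq_of_forall_prime_not_dvd {d y : ℕ} (hd : d ≠ 0) (hy : y ≠ 0)
    (hfac : ∀ p, p.Prime → p ∣ d → y.factorization p = d.factorization p)
    (hcoprime : ∀ s, s.Prime → d * s ≤ y → ¬ s ∣ d → ¬ s ∣ y) : y = d := by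
  have hdy : d ∣ y := by
    rw [← factorization_prime_le_iff_dvd hd hy]
    intro p hp
    by_cases hpd : p ∣ d
    · exact (hfac p hp hpd).ge
    · simp [factorization_eq_zero_of_not_dvd hpd]
  obtain ⟨k, rfl⟩ := hdy
  have hk : k ≠ 0 := right_ne_zero_of_mul hy
  suffices k = 1 by simp [this]
  refine eq_one_iff_not_exists_prime_dvd.mpr fun s hs hsk => ?_
  by_cases hsd : s ∣ d
  · have hval := hfac s hs hsd
    rw [factorization_mul hd hk, Finsupp.add_apply] at hval
    exact (hs.factorization_pos_of_dvd hk hsk).ne' (by omega)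
  · exact hcoprime s hs (Nat.mul_le_mul_left d (le_of_dvd (pos_of_ne_zero hk) hsk)) hsd
      (hsk.trans (dvd_mul_left k d))

theorem factorization_mul_prime_of_dvd {m q r : ℕ} (hm : m ≠ 0) (hq : q.Prime) (hqm : ¬ q ∣ m)
    (hr : r ∣ m) : (m * q).factorization r = m.factorization r := by
  have hrq : r ≠ q := fun h => hqm (h ▸ hr)
  rw [factorization_mul hm hq.ne_zero, hq.factorization, Finsupp.add_apply,
    Finsupp.single_eq_of_ne hrq, add_zero]

theorem factorization_mul_prime_self {m q : ℕ} (hm : m ≠ 0) (hq : q.Prime) (hqm : ¬ q ∣ m) :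
    (m * q).factorization q = 1 := by
  rw [factorization_mul hm hq.ne_zero, Finsupp.add_apply, factorization_eq_zero_of_not_dvd hqm,
    hq.factorization_self, zero_add]

theorem eq_mul_prime_iff {m q n y : ℕ} (hm : m ≠ 0) (hq : q.Prime) (hqm : ¬ q ∣ m) (hy : y ≠ 0)
    (hyn : y < n) :
    y = m * q ↔
      (∀ r, r.Prime → r ∣ m → y.factorization r = m.factorization r) ∧ y.factorization q = 1 ∧
        ∀ s, s.Prime → m * s < n → s ≠ q → ¬ s ∣ m → ¬ s ∣ y := by
  constructor
  · rintro rfl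
    refine ⟨fun r _ hr => factorization_mul_prime_of_dvd hm hq hqm hr,
      factorization_mul_prime_self hm hq hqm, fun s hs _ hsq hsm hsmq => ?_⟩
    rcases hs.dvd_mul.mp hsmq with h | h
    · exact hsm h
    · exact hsq ((prime_dvd_prime_iff_eq hs hq).mp h)
  · rintro ⟨hm_fac, hq_fac, hcoprime⟩
    refine eq_of_factorization_eq_of_forall_prime_not_dvd (mul_ne_zero hm hq.ne_zero) hy
      (fun p hp hpmq => ?_) (fun s hs hsy hsmq => ?_)
    · rcases hp.dvd_mul.mp hpmq with hpm | hpq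
      · rw [hm_fac p hp hpm, factorization_mul_prime_of_dvd hm hq hqm hpm]
      · rw [(prime_dvd_prime_iff_eq hp hq).mp hpq, hq_fac, factorization_mul_prime_self hm hq hqm]
    · have hms : m * s < n := calc
        m * s < m * q * s :=
          Nat.mul_lt_mul_of_pos_right (lt_mul_of_one_lt_right (pos_of_ne_zero hm) hq.one_lt) hs.pos
        _ ≤ y := hsy
        _ < n := hyn
      exact hcoprime s hs hms (fun h => hsmq (h ▸ dvd_mul_left q m))
        (fun h => hsmq (h.mul_right q))

end Nat

theorem stmt_4_general (m2 n : ℕ) (hm2 : 0 < m2) (q : ℕ) (hq : q.Prime)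
    (hqm2 : ¬ q ∣ m2) (x : ℤ) (hx0 : 0 < x) (hxn : x < (n : ℤ)) :
    x = (m2 : ℤ) * q ↔
      ((∀ r : ℕ, r.Prime → r ∣ m2 →
          ((r : ℤ) ^ (m2.factorization r) ∣ x ∧ ¬ (r : ℤ) ^ (m2.factorization r + 1) ∣ x)) ∧
        ((q : ℤ) ∣ x ∧ ¬ (q : ℤ) ^ 2 ∣ x) ∧
        (∀ s : ℕ, s.Prime → m2 * s < n → s ≠ q → ¬ s ∣ m2 → ¬ (s : ℤ) ∣ x)) := by
  lift x to ℕ using hx0.le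
  have hx : x ≠ 0 := by exact_mod_cast hx0.ne'
  simp only [← Nat.cast_pow, ← Nat.cast_mul, Nat.cast_inj, Int.natCast_dvd_natCast,
    Nat.dvd_and_not_sq_dvd_iff hq hx]
  rw [Nat.eq_mul_prime_iff hm2.ne' hq hqm2 hx (by exact_mod_cast hxn)]
  refine and_congr ?_ Iff.rfl
  exact forall_congr' fun r => imp_congr_right fun hr => imp_congr_right fun _ =>
    (Nat.pow_dvd_and_not_pow_succ_dvd_iff hr hx).symm

theorem stmt_4 (m2 n : ℕ) (hm2 : 0 < m2) (hn : 0 < n) (q : ℕ) (hq : q.Prime)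
    (hqm2 : ¬ q ∣ m2) (x : ℤ) (hx0 : 0 < x) (hxn : x < (n : ℤ)) :
    x = (m2 : ℤ) * q ↔
      ((∀ r : ℕ, r.Prime → r ∣ m2 →
          ((r : ℤ) ^ (m2.factorization r) ∣ x ∧ ¬ (r : ℤ) ^ (m2.factorization r + 1) ∣ x)) ∧
        ((q : ℤ) ∣ x ∧ ¬ (q : ℤ) ^ 2 ∣ x) ∧
        (∀ s : ℕ, s.Prime → m2 * s < n → s ≠ q → ¬ s ∣ m2 → ¬ (s : ℤ) ∣ x)) :=
  stmt_4_general m2 n hm2 q hq hqm2 x hx0 hxn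
end

section
/- Let m2 and n be positive integers, let q be a prime dividing m2, and let x be an integer with 0 < x < n. For each prime r dividing m2 write α_r for the r-adic valuation of m2. Then x = m2·q if and only if the following three conditions all hold: (iv) for every prime r dividing m2 with r ≠ q, r^(α_r) divides x and r^(α_r+1) does not divide x; (v) q^(α_q+1) divides x and q^(α_q+2) does not divide x; (vi) for every prime s with m2·s < n and s not dividing m2, s does not divide x. -/
/-!
Write `y` for `x` viewed as a natural number. Conditions (iv) and (v) say exactly that `y` and
`m2 * q` have the same `r`-adic valuation at every prime `r ∣ m2`; as `q ∣ m2`, these are all the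
primes of `m2 * q`, so `y = m2 * q * k`, and `k` has no prime factor in common with `m2`.
A prime factor `s` of `k` would then satisfy `m2 * s < m2 * q * k = y < n`, contradicting (vi);
hence `k = 1`.
-/

namespace Nat

theorem factorization_eq_iff_pow_dvd_and_not_pow_succ_dvd {p y a : ℕ} (hp : p.Prime)
    (hy : y ≠ 0) : y.factorization p = a ↔ p ^ a ∣ y ∧ ¬ p ^ (a + 1) ∣ y := by
  rw [hp.pow_dvd_iff_le_factorization hy, hp.pow_dvd_iff_le_factorization hy]
  omega

theorem factorization_mul_prime_apply {m q : ℕ} (hm : m ≠ 0) (hq : q.Prime) (r : ℕ) :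
    (m * q).factorization r = m.factorization r + if r = q then 1 else 0 := by
  simp [factorization_mul hm hq.ne_zero, hq.factorization, Finsupp.single_apply, eq_comm]

theorem Prime.dvd_of_dvd_mul_prime {s m q : ℕ} (hs : s.Prime) (hq : q.Prime) (hqm : q ∣ m)
    (h : s ∣ m * q) : s ∣ m :=
  (hs.dvd_mul.mp h).elim id fun hsq => (prime_dvd_prime_iff_eq hs hq).mp hsq ▸ hqm

theorem eq_mul_prime_iff_factorization_eq {m q y n : ℕ} (hm : m ≠ 0) (hq : q.Prime) (hqm : q ∣ m)
    (hy : y ≠ 0) (hyn : y < n) :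
    y = m * q ↔ (∀ r, r.Prime → r ∣ m → y.factorization r = (m * q).factorization r) ∧
      ∀ s, s.Prime → m * s < n → ¬ s ∣ m → ¬ s ∣ y := by
  have hmq : m * q ≠ 0 := mul_ne_zero hm hq.ne_zero
  refine ⟨?_, fun ⟨hval, hsmall⟩ => ?_⟩
  · rintro rfl
    exact ⟨fun _ _ _ => rfl, fun s hs _ hsm hsy => hsm (hs.dvd_of_dvd_mul_prime hq hqm hsy)⟩
  have hdvd : m * q ∣ y := by
    refine (factorization_prime_le_iff_dvd hmq hy).mp fun r hr => ?_
    by_cases hrm : r ∣ m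
    · exact (hval r hr hrm).ge
    · rw [factorization_eq_zero_of_not_dvd fun h => hrm (hr.dvd_of_dvd_mul_prime hq hqm h)]
      exact zero_le _
  obtain ⟨k, rfl⟩ := hdvd
  have hk : k ≠ 0 := right_ne_zero_of_mul hy
  suffices k = 1 by rw [this, mul_one]
  by_contra hk1
  set s := k.minFac
  have hs : s.Prime := minFac_prime hk1
  have hsk : s ∣ k := minFac_dvd k
  by_cases hsm : s ∣ m
  · have hks : k.factorization s = 0 := by
      simpa [factorization_mul hmq hk] using hval s hs hsm
    exact (hs.factorization_pos_of_dvd hk hsk).ne' hks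
  · refine hsmall s hs (lt_trans ?_ hyn) hsm (Dvd.dvd.mul_left hsk _)
    have hs_lt : s < q * k := lt_of_lt_of_le (lt_mul_left hs.pos one_lt_two)
      (mul_le_mul hq.two_le (minFac_le (pos_of_ne_zero hk)) hs.pos.le (zero_le _))
    rw [mul_assoc]
    exact mul_lt_mul_of_pos_left hs_lt (pos_of_ne_zero hm)

theorem forall_factorization_eq_mul_prime_iff {m q y : ℕ} (hm : m ≠ 0) (hq : q.Prime)
    (hqm : q ∣ m) (hy : y ≠ 0) :
    (∀ r, r.Prime → r ∣ m → y.factorization r = (m * q).factorization r) ↔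
      (∀ r, r.Prime → r ∣ m → r ≠ q →
          r ^ m.factorization r ∣ y ∧ ¬ r ^ (m.factorization r + 1) ∣ y) ∧
        q ^ (m.factorization q + 1) ∣ y ∧ ¬ q ^ (m.factorization q + 2) ∣ y := by
  simp only [factorization_mul_prime_apply hm hq]
  refine ⟨fun h => ⟨fun r hr hrm hrq => ?_, ?_⟩, fun ⟨hr, hq'⟩ r hr' hrm => ?_⟩
  · simpa [hrq, factorization_eq_iff_pow_dvd_and_not_pow_succ_dvd hr hy] using h r hr hrm
  · simpa [factorization_eq_iff_pow_dvd_and_not_pow_succ_dvd hq hy] using h q hq hqm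
  · rw [factorization_eq_iff_pow_dvd_and_not_pow_succ_dvd hr' hy]
    by_cases hrq : r = q
    · subst hrq
      simpa using hq'
    · simpa [hrq] using hr r hr' hrm hrq

end Nat

theorem stmt_5_general (m2 n : ℕ) (hm2 : 0 < m2) (q : ℕ) (hq : q.Prime)
    (hqm2 : q ∣ m2) (x : ℤ) (hx0 : 0 < x) (hxn : x < (n : ℤ)) :
    x = (m2 : ℤ) * q ↔
      ((∀ r : ℕ, r.Prime → r ∣ m2 → r ≠ q →
          ((r : ℤ) ^ (m2.factorization r) ∣ x ∧ ¬ (r : ℤ) ^ (m2.factorization r + 1) ∣ x)) ∧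
        ((q : ℤ) ^ (m2.factorization q + 1) ∣ x ∧ ¬ (q : ℤ) ^ (m2.factorization q + 2) ∣ x) ∧
        (∀ s : ℕ, s.Prime → m2 * s < n → ¬ s ∣ m2 → ¬ (s : ℤ) ∣ x)) := by
  lift x to ℕ using hx0.le
  have hy : x ≠ 0 := by exact_mod_cast hx0.ne'
  simp only [← Nat.cast_pow, ← Nat.cast_mul, Int.natCast_dvd_natCast, Nat.cast_inj]
  rw [Nat.eq_mul_prime_iff_factorization_eq hm2.ne' hq hqm2 hy (by exact_mod_cast hxn),
    Nat.forall_factorization_eq_mul_prime_iff hm2.ne' hq hqm2 hy, and_assoc]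

theorem stmt_5 (m2 n : ℕ) (hm2 : 0 < m2) (hn : 0 < n) (q : ℕ) (hq : q.Prime)
    (hqm2 : q ∣ m2) (x : ℤ) (hx0 : 0 < x) (hxn : x < (n : ℤ)) :
    x = (m2 : ℤ) * q ↔
      ((∀ r : ℕ, r.Prime → r ∣ m2 → r ≠ q →
          ((r : ℤ) ^ (m2.factorization r) ∣ x ∧ ¬ (r : ℤ) ^ (m2.factorization r + 1) ∣ x)) ∧
        ((q : ℤ) ^ (m2.factorization q + 1) ∣ x ∧ ¬ (q : ℤ) ^ (m2.factorization q + 2) ∣ x) ∧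
        (∀ s : ℕ, s.Prime → m2 * s < n → ¬ s ∣ m2 → ¬ (s : ℤ) ∣ x)) :=
  stmt_5_general m2 n hm2 q hq hqm2 x hx0 hxn
end

section
/- Let r be a prime, let α be a positive integer, let m1, n, p be natural numbers with r not dividing m1 and m1·p ≤ n. Then [r^α divides n − m1·p and r^(α+1) does not divide n − m1·p] if and only if there exists an integer j with 1 ≤ j ≤ r−1 such that, in ZMod (r^(α+1)), (p) = (n)·(m1)⁻¹ + j·(r^α). -/
/-! Multiplying by the unit `m1` turns the congruence into `r^(α+1) ∣ (n - m1 p) + m1 j r^α`. Both sides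
of the equivalence force `n - m1 p = r^α t`, and then the condition reads `r ∣ t + m1 j`; since `m1` is
invertible mod `r`, such a `j ∈ [1, r-1]` exists exactly when `t ≢ 0 (mod r)`. -/

theorem ZMod.eq_mul_inv_add_iff {N : ℕ} {a : ZMod N} (ha : IsUnit a) (x b c : ZMod N) :
    x = b * a⁻¹ + c ↔ a * x = b + a * c := by
  have : a * (b * a⁻¹ + c) = b + a * c := by
    rw [mul_add, mul_left_comm, ZMod.mul_inv_of_unit a ha, mul_one]
  rw [← this, ha.mul_right_inj]

theorem Int.exists_dvd_add_mul_iff_not_dvd {r : ℕ} (hr : r.Prime) {m : ℤ} (hm : ¬ (r : ℤ) ∣ m)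
    (t : ℤ) : (∃ j : ℕ, 1 ≤ j ∧ j ≤ r - 1 ∧ (r : ℤ) ∣ t + m * j) ↔ ¬ (r : ℤ) ∣ t := by
  have : Fact r.Prime := ⟨hr⟩
  constructor
  · rintro ⟨j, hj1, hjr, hdvd⟩ ht
    have hmj : (r : ℤ) ∣ m * j := (dvd_add_right ht).1 hdvd
    rcases Int.Prime.dvd_mul' hr hmj with h | h
    · exact hm h
    · have := Nat.le_of_dvd hj1 (Int.natCast_dvd_natCast.1 h)
      omega
  · intro ht
    rw [← ZMod.intCast_zmod_eq_zero_iff_dvd] at hm ht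
    have he : -(t : ZMod r) * (m : ZMod r)⁻¹ ≠ 0 := mul_ne_zero (neg_ne_zero.2 ht) (inv_ne_zero hm)
    refine ⟨ZMod.val (-(t : ZMod r) * (m : ZMod r)⁻¹),
      Nat.one_le_iff_ne_zero.2 ((ZMod.val_ne_zero _).2 he), Nat.le_sub_one_of_lt (ZMod.val_lt _), ?_⟩
    rw [← ZMod.intCast_zmod_eq_zero_iff_dvd]
    push_cast
    rw [ZMod.natCast_zmod_val]
    field_simp
    ring

theorem Int.pow_dvd_and_not_pow_succ_dvd_iff {r : ℕ} (hr : r.Prime) {m : ℤ}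
    (hm : ¬ (r : ℤ) ∣ m) (k : ℕ) (x : ℤ) :
    ((r : ℤ) ^ k ∣ x ∧ ¬ (r : ℤ) ^ (k + 1) ∣ x) ↔
      ∃ j : ℕ, 1 ≤ j ∧ j ≤ r - 1 ∧ (r : ℤ) ^ (k + 1) ∣ x + m * j * r ^ k := by
  have hrk : (r : ℤ) ^ k ≠ 0 := pow_ne_zero _ (by exact_mod_cast hr.ne_zero)
  have hdvd_of_rhs : (∃ j : ℕ, 1 ≤ j ∧ j ≤ r - 1 ∧ (r : ℤ) ^ (k + 1) ∣ x + m * j * r ^ k) →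
      (r : ℤ) ^ k ∣ x := fun ⟨j, _, _, h⟩ =>
    (dvd_add_left (dvd_mul_left _ _)).1 ((pow_dvd_pow _ k.le_succ).trans h)
  by_cases hx : (r : ℤ) ^ k ∣ x
  · obtain ⟨t, rfl⟩ := hx
    have key : ∀ s : ℤ, (r : ℤ) ^ (k + 1) ∣ r ^ k * s ↔ (r : ℤ) ∣ s := fun s => by
      rw [pow_succ, mul_dvd_mul_iff_left hrk]
    have hsum : ∀ j : ℕ, (r : ℤ) ^ k * t + m * j * r ^ k = r ^ k * (t + m * j) := fun j => by
      ring
    simp only [hsum, key, dvd_mul_right, true_and]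
    exact (Int.exists_dvd_add_mul_iff_not_dvd hr hm t).symm
  · exact iff_of_false (fun h => hx h.1) (fun h => hx (hdvd_of_rhs h))

theorem stmt_6_general (r : ℕ) (hr : r.Prime) (α : ℕ) (m1 n p : ℕ)
    (hrm1 : ¬ r ∣ m1) :
    ((r : ℤ) ^ α ∣ (n : ℤ) - (m1 : ℤ) * p ∧ ¬ (r : ℤ) ^ (α + 1) ∣ (n : ℤ) - (m1 : ℤ) * p) ↔
      ∃ j : ℕ, 1 ≤ j ∧ j ≤ r - 1 ∧
        (p : ZMod (r ^ (α + 1))) =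
          (n : ZMod (r ^ (α + 1))) * (m1 : ZMod (r ^ (α + 1)))⁻¹ +
            (j : ZMod (r ^ (α + 1))) * (r : ZMod (r ^ (α + 1))) ^ α := by
  have hm : ¬ (r : ℤ) ∣ m1 := by exact_mod_cast hrm1
  have hcop : m1.Coprime r := Nat.coprime_comm.1 (hr.coprime_iff_not_dvd.2 hrm1)
  have hunit : IsUnit (m1 : ZMod (r ^ (α + 1))) :=
    (ZMod.isUnit_iff_coprime _ _).2 (hcop.pow_right _)
  rw [Int.pow_dvd_and_not_pow_succ_dvd_iff hr hm]
  refine exists_congr fun j => and_congr_right' (and_congr_right' ?_)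
  rw [ZMod.eq_mul_inv_add_iff hunit]
  have hcast := ZMod.intCast_eq_intCast_iff_dvd_sub (m1 * p) (n + m1 * j * r ^ α) (r ^ (α + 1))
  push_cast at hcast
  rw [← mul_assoc, hcast, sub_add_eq_add_sub]

theorem stmt_6 (r : ℕ) (hr : r.Prime) (α : ℕ) (hα : 0 < α) (m1 n p : ℕ)
    (hrm1 : ¬ r ∣ m1) (hpn : m1 * p ≤ n) :
    ((r : ℤ) ^ α ∣ (n : ℤ) - (m1 : ℤ) * p ∧ ¬ (r : ℤ) ^ (α + 1) ∣ (n : ℤ) - (m1 : ℤ) * p) ↔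
      ∃ j : ℕ, 1 ≤ j ∧ j ≤ r - 1 ∧
        (p : ZMod (r ^ (α + 1))) =
          (n : ZMod (r ^ (α + 1))) * (m1 : ZMod (r ^ (α + 1)))⁻¹ +
            (j : ZMod (r ^ (α + 1))) * (r : ZMod (r ^ (α + 1))) ^ α :=
  stmt_6_general r hr α m1 n p hrm1
end
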